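/- Let ρ₁, ρ₂ be finite positive Borel measures on the circle Λ with ρ₁(Λ) ≤ ρ₂(Λ). Then the collapsed set function is dominated by ρ₂: for every half-open arc (a,b] ⊆ Λ one has ρ₁((a,b]) + J(a) − J(b) ≤ ρ₂((a,b]). -/
import Mathlib


open MeasureTheory Set Filter Topology

noncomputable section

instance fact01 : Fact ((0:ℝ) < 1) := ⟨zero_lt_one⟩

/-- The circle `ℝ/ℤ`. -/
abbrev Circle' : Type := AddCircle (1:ℝ)

/-- The angular position of `w` in the arc starting at `u`, measured positively;
a real number in `[0,1)`. -/
noncomputable def theta (u w : Circle') : ℝ := ((AddCircle.equivIco 1 0) (w - u) : ℝ)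

/-- The closed arc `[u,v]` from `u` to `v` in the positive direction. -/
def arcCC (u v : Circle') : Set Circle' := {w | theta u w ≤ theta u v}

/-- The half-open arc `(u,v]`. -/
def arcOC (u v : Circle') : Set Circle' := {w | 0 < theta u w ∧ theta u w ≤ theta u v}

/-- The half-open arc `[u,v)`. -/
def arcCO (u v : Circle') : Set Circle' := {w | theta u w < theta u v}

/-- The open arc `(u,v)`. -/
def arcOO (u v : Circle') : Set Circle' := {w | 0 < theta u w ∧ theta u w < theta u v}

/-- The excess `E(u,v) = ρ₁([u,v]) - ρ₂([u,v])`. -/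
noncomputable def excess (ρ₁ ρ₂ : Measure Circle') (u v : Circle') : ℝ :=
  (ρ₁ (arcCC u v)).toReal - (ρ₂ (arcCC u v)).toReal

/-- The flux `J(v) = sup_u max (E(u,v)) 0`. -/
noncomputable def flux (ρ₁ ρ₂ : Measure Circle') (v : Circle') : ℝ :=
  ⨆ u : Circle', max (excess ρ₁ ρ₂ u v) 0

/-- The set `𝒥 = {v | ∃ u, E(u,v) > 0}`. -/
def Jset (ρ₁ ρ₂ : Measure Circle') : Set Circle' := {v | ∃ u : Circle', 0 < excess ρ₁ ρ₂ u v}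

set_option linter.unusedSectionVars false

lemma theta_coe (x y : ℝ) : theta ↑x ↑y = Int.fract (y - x) := by
  have : ((y:Circle') - (x:Circle')) = ((y - x : ℝ) : Circle') := (AddCircle.coe_sub 1 y x).symm
  rw [theta, this, AddCircle.coe_equivIco_mk_apply]
  simp

lemma theta_mem (u w : Circle') : theta u w ∈ Set.Ico (0:ℝ) 1 := by
  have h := ((AddCircle.equivIco 1 0) (w - u)).2
  simpa [theta] using h

lemma measurable_theta (u : Circle') : Measurable (theta u) := by
  have h1 : Measurable (fun w : Circle' => w - u) := (measurable_id.sub_const u)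
  have h2 := (AddCircle.measurableEquivIco (T := 1) 0).measurable
  exact (measurable_subtype_coe.comp h2).comp h1

lemma theta_master (a b w : Circle') :
    theta b w = theta a w - theta a b + (if theta a w < theta a b then 1 else 0) := by
  induction a using QuotientAddGroup.induction_on with | H x =>
  induction b using QuotientAddGroup.induction_on with | H y =>
  induction w using QuotientAddGroup.induction_on with | H z =>
  rw [theta_coe, theta_coe, theta_coe]
  rw [Int.fract_eq_iff]
  have h1 := Int.fract_nonneg (z - x)
  have h2 := Int.fract_lt_one (z - x)
  have h3 := Int.fract_nonneg (y - x)
  have h4 := Int.fract_lt_one (y - x)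
  refine ⟨by split_ifs with h <;> linarith, by split_ifs with h <;> linarith, ?_⟩
  refine ⟨⌊z - x⌋ - ⌊y - x⌋ - (if Int.fract (z-x) < Int.fract (y-x) then 1 else 0), ?_⟩
  unfold Int.fract
  split_ifs <;> push_cast <;> ring

lemma theta_self (u : Circle') : theta u u = 0 := by
  induction u using QuotientAddGroup.induction_on with | H x =>
  rw [theta_coe, sub_self, Int.fract_zero]

lemma theta_eq_zero_iff {a b : Circle'} : theta a b = 0 ↔ b = a := by
  constructor
  · induction a using QuotientAddGroup.induction_on with | H x =>
    induction b using QuotientAddGroup.induction_on with | H y =>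
    rw [theta_coe]
    intro h
    have hy : y - x = (⌊y - x⌋ : ℤ) • (1:ℝ) := by
      rw [zsmul_eq_mul, mul_one]
      unfold Int.fract at h
      linarith
    have : ((y - x : ℝ) : Circle') = 0 := by
      rw [AddCircle.coe_eq_zero_iff]
      exact ⟨⌊y - x⌋, hy.symm⟩
    rw [AddCircle.coe_sub, sub_eq_zero] at this
    exact this
  · rintro rfl; exact theta_self _

lemma theta_pos_of_ne {a b : Circle'} (h : b ≠ a) : 0 < theta a b :=
  lt_of_le_of_ne (theta_mem a b).1 (fun he => h (theta_eq_zero_iff.mp he.symm))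


lemma measurableSet_arcCC (u v : Circle') : MeasurableSet (arcCC u v) :=
  (measurable_theta u) measurableSet_Iic

lemma measurableSet_arcOC (u v : Circle') : MeasurableSet (arcOC u v) :=
  (measurable_theta u) measurableSet_Ioc

lemma arc_union {u a b : Circle'} (h : theta u a ≤ theta u b) :
    arcCC u b = arcCC u a ∪ arcOC a b := by
  have hmb : theta a b = theta u b - theta u a := by
    rw [theta_master u a b, if_neg (not_lt.mpr h)]; ring
  ext w
  have hm := theta_master u a w
  simp only [arcCC, arcOC, Set.mem_setOf_eq, Set.mem_union]
  constructor
  · intro hw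
    rcases le_or_gt (theta u w) (theta u a) with h1 | h1
    · exact Or.inl h1
    · right
      rw [hm, if_neg (not_lt.mpr h1.le), hmb]
      constructor <;> [linarith; linarith]
  · rintro (h1 | ⟨h1, h2⟩)
    · linarith
    · rcases lt_or_ge (theta u w) (theta u a) with h3 | h3
      · rw [if_pos h3] at hm
        rw [hmb] at h2
        linarith [(theta_mem u b).2, (theta_mem u w).1]
      · rw [if_neg (not_lt.mpr h3)] at hm
        rw [hmb] at h2
        linarith

lemma arc_disjoint {u a b : Circle'} (h : theta u a ≤ theta u b) :
    Disjoint (arcCC u a) (arcOC a b) := by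
  rw [Set.disjoint_left]
  intro w hw hw2
  obtain ⟨h1, h2⟩ := hw2
  have hw' : theta u w ≤ theta u a := hw
  have hm := theta_master u a w
  have hmb : theta a b = theta u b - theta u a := by
    rw [theta_master u a b, if_neg (not_lt.mpr h)]; ring
  rw [hmb] at h2
  rcases lt_or_ge (theta u w) (theta u a) with h3 | h3
  · rw [if_pos h3] at hm
    linarith [(theta_mem u b).2, (theta_mem u w).1]
  · rw [if_neg (not_lt.mpr h3)] at hm
    linarith

lemma circle_union {a b : Circle'} (hab : a ≠ b) :
    arcOC a b ∪ arcOC b a = Set.univ := by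
  have hba : theta b a = 1 - theta a b := by
    rw [theta_master a b a, theta_self, if_pos]; · ring
    · exact theta_pos_of_ne (Ne.symm hab)
  have hpos : 0 < theta a b := theta_pos_of_ne (Ne.symm hab)
  ext w
  simp only [arcOC, Set.mem_setOf_eq, Set.mem_union, Set.mem_univ, iff_true]
  have hm := theta_master a b w
  rcases lt_or_ge (theta a b) (theta a w) with h1 | h1
  · right
    rw [if_neg (not_lt.mpr h1.le)] at hm
    rw [hba, hm]
    constructor <;> linarith [(theta_mem a w).2]
  · rcases (theta_mem a w).1.lt_or_eq with h2 | h2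
    · exact Or.inl ⟨h2, h1⟩
    · right
      rw [if_pos (by linarith)] at hm
      rw [hba, hm]
      constructor <;> linarith [(theta_mem a b).2]

lemma circle_disjoint {a b : Circle'} (hab : a ≠ b) :
    Disjoint (arcOC a b) (arcOC b a) := by
  have hba : theta b a = 1 - theta a b := by
    rw [theta_master a b a, theta_self, if_pos]; · ring
    · exact theta_pos_of_ne (Ne.symm hab)
  rw [Set.disjoint_left]
  rintro w ⟨h1, h2⟩ ⟨h3, h4⟩
  have hm := theta_master a b w
  rw [hba] at h4
  rcases lt_or_ge (theta a w) (theta a b) with h5 | h5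
  · rw [if_pos h5] at hm
    linarith
  · rw [if_neg (not_lt.mpr h5)] at hm
    linarith



lemma theta_add_coe (a : Circle') (r : ℝ) : theta a (a + ↑r) = Int.fract r := by
  induction a using QuotientAddGroup.induction_on with | H x =>
  have : ((x : Circle') + (r : Circle')) = ((x + r : ℝ) : Circle') := by
    rw [AddCircle.coe_add]
  rw [this, theta_coe, add_sub_cancel_left]

section Meas

variable (ρ₁ ρ₂ : Measure Circle') [IsFiniteMeasure ρ₁] [IsFiniteMeasure ρ₂]

lemma toReal_split (ρ : Measure Circle') [IsFiniteMeasure ρ] {u a b : Circle'}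
    (h : theta u a ≤ theta u b) :
    (ρ (arcCC u b)).toReal = (ρ (arcCC u a)).toReal + (ρ (arcOC a b)).toReal := by
  rw [arc_union h, measure_union (arc_disjoint h) (measurableSet_arcOC a b),
    ENNReal.toReal_add (measure_ne_top ρ _) (measure_ne_top ρ _)]

lemma excess_split {u a b : Circle'} (h : theta u a ≤ theta u b) :
    excess ρ₁ ρ₂ u b = excess ρ₁ ρ₂ u a
      + ((ρ₁ (arcOC a b)).toReal - (ρ₂ (arcOC a b)).toReal) := by
  unfold excess
  rw [toReal_split ρ₁ h, toReal_split ρ₂ h]; ring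

lemma flux_bdd (v : Circle') :
    BddAbove (Set.range fun u => max (excess ρ₁ ρ₂ u v) 0) := by
  refine ⟨max (ρ₁ Set.univ).toReal 0, ?_⟩
  rintro x ⟨u, rfl⟩
  refine max_le_max ?_ le_rfl
  unfold excess
  have h1 : (ρ₁ (arcCC u v)).toReal ≤ (ρ₁ Set.univ).toReal :=
    ENNReal.toReal_mono (measure_ne_top ρ₁ _) (measure_mono (Set.subset_univ _))
  have h2 : 0 ≤ (ρ₂ (arcCC u v)).toReal := ENNReal.toReal_nonneg
  linarith

lemma le_flux (u v : Circle') : max (excess ρ₁ ρ₂ u v) 0 ≤ flux ρ₁ ρ₂ v :=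
  le_ciSup (flux_bdd ρ₁ ρ₂ v) u

lemma excess_le_flux (u v : Circle') : excess ρ₁ ρ₂ u v ≤ flux ρ₁ ρ₂ v :=
  le_trans (le_max_left _ _) (le_flux ρ₁ ρ₂ u v)

lemma D_le_flux {a b : Circle'} (hab : a ≠ b) :
    (ρ₁ (arcOC a b)).toReal - (ρ₂ (arcOC a b)).toReal ≤ flux ρ₁ ρ₂ b := by
  set θ := theta a b with hθdef
  have hθ : 0 < θ := theta_pos_of_ne (Ne.symm hab)
  have hθ1 : θ < 1 := (theta_mem a b).2
  set u : ℕ → Circle' := fun n => a + ((θ / (n + 2) : ℝ) : Circle') with hudef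
  set ε : ℕ → ℝ := fun n => θ / (n + 2) with hεdef
  have hε_pos : ∀ n, 0 < ε n := fun n => by positivity
  have hε_lt : ∀ n, ε n < θ := by
    intro n
    rw [hεdef]
    rw [div_lt_iff₀ (by positivity)]
    nlinarith
  have hεθ : ∀ n, theta a (u n) = ε n := by
    intro n
    rw [hudef]
    simp only
    rw [theta_add_coe, Int.fract_eq_self.mpr ⟨(hε_pos n).le, lt_trans (hε_lt n) hθ1⟩]
  set S : ℕ → Set Circle' := fun n => arcCC (u n) b with hSdef
  have hS_eq : ∀ n, S n = {w | ε n ≤ theta a w ∧ theta a w ≤ θ} := by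
    intro n
    ext w
    have hmw := theta_master a (u n) w
    have hmb := theta_master a (u n) b
    rw [hεθ] at hmw hmb
    rw [if_neg (not_lt.mpr (hε_lt n).le)] at hmb
    simp only [hSdef, arcCC, Set.mem_setOf_eq]
    constructor
    · intro hw
      rcases lt_or_ge (theta a w) (ε n) with h1 | h1
      · rw [if_pos h1] at hmw
        rw [hmw, hmb] at hw
        exfalso
        linarith [(theta_mem a w).1]
      · rw [if_neg (not_lt.mpr h1)] at hmw
        rw [hmw, hmb] at hw
        exact ⟨h1, by linarith⟩
    · rintro ⟨h1, h2⟩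
      rw [if_neg (not_lt.mpr h1)] at hmw
      rw [hmw, hmb]
      linarith
  have hmono : Monotone S := by
    intro n m hnm
    rw [hS_eq n, hS_eq m]
    intro w hw
    refine ⟨le_trans ?_ hw.1, hw.2⟩
    show θ / (↑m + 2) ≤ θ / (↑n + 2)
    gcongr
  have hUnion : ⋃ n, S n = arcOC a b := by
    ext w
    simp only [Set.mem_iUnion, arcOC, Set.mem_setOf_eq]
    constructor
    · rintro ⟨n, hn⟩
      rw [hS_eq n] at hn
      exact ⟨lt_of_lt_of_le (hε_pos n) hn.1, hn.2⟩
    · rintro ⟨h1, h2⟩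
      obtain ⟨n, hn⟩ := exists_nat_ge (θ / theta a w)
      refine ⟨n, ?_⟩
      rw [hS_eq n]
      refine ⟨?_, h2⟩
      rw [hεdef]
      rw [div_le_iff₀ (by positivity)]
      have : θ ≤ n * theta a w := by
        have := mul_le_mul_of_nonneg_right hn h1.le
        rwa [div_mul_cancel₀ _ (ne_of_gt h1)] at this
      nlinarith
  have hsub : ∀ n, S n ⊆ arcOC a b := fun n => hUnion ▸ Set.subset_iUnion S n
  have hbound : ∀ n, (ρ₁ (S n)).toReal ≤ flux ρ₁ ρ₂ b + (ρ₂ (arcOC a b)).toReal := by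
    intro n
    have h1 : excess ρ₁ ρ₂ (u n) b ≤ flux ρ₁ ρ₂ b := excess_le_flux ρ₁ ρ₂ (u n) b
    have h2 : (ρ₂ (S n)).toReal ≤ (ρ₂ (arcOC a b)).toReal :=
      ENNReal.toReal_mono (measure_ne_top ρ₂ _) (measure_mono (hsub n))
    have h3 : excess ρ₁ ρ₂ (u n) b = (ρ₁ (S n)).toReal - (ρ₂ (S n)).toReal := rfl
    linarith
  have htendsto : Tendsto (fun n => (ρ₁ (S n)).toReal) atTop
      (𝓝 (ρ₁ (arcOC a b)).toReal) := by
    have h := tendsto_measure_iUnion_atTop (μ := ρ₁) hmono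
    rw [hUnion] at h
    exact (ENNReal.tendsto_toReal (measure_ne_top ρ₁ _)).comp h
  have := le_of_tendsto' htendsto hbound
  linarith

end Meas

/-- the collapsed set function is dominated by `ρ₂`: for every half-open arc
`(a,b]` one has `ρ₁((a,b]) + J(a) - J(b) ≤ ρ₂((a,b])`. -/
theorem stmt6 (ρ₁ ρ₂ : Measure Circle') [IsFiniteMeasure ρ₁] [IsFiniteMeasure ρ₂]
    (hmass : ρ₁ Set.univ ≤ ρ₂ Set.univ) :
    ∀ a b : Circle',
      (ρ₁ (arcOC a b)).toReal + flux ρ₁ ρ₂ a - flux ρ₁ ρ₂ b ≤ (ρ₂ (arcOC a b)).toReal := by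
  intro a b
  by_cases hab : a = b
  · subst hab
    have hempty : arcOC a a = ∅ := by
      ext w
      simp only [arcOC, Set.mem_setOf_eq, theta_self, Set.mem_empty_iff_false, iff_false]
      rintro ⟨h1, h2⟩
      linarith
    rw [hempty]
    simp
  · have key := D_le_flux ρ₁ ρ₂ hab
    have hpart : ∀ ρ : Measure Circle', ρ (arcOC a b) + ρ (arcOC b a) = ρ Set.univ := by
      intro ρ
      rw [← measure_union (circle_disjoint hab) (measurableSet_arcOC b a), circle_union hab]
    have h1 : (ρ₁ (arcOC a b)).toReal + (ρ₁ (arcOC b a)).toReal = (ρ₁ Set.univ).toReal := by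
      rw [← ENNReal.toReal_add (measure_ne_top _ _) (measure_ne_top _ _), hpart ρ₁]
    have h2 : (ρ₂ (arcOC a b)).toReal + (ρ₂ (arcOC b a)).toReal = (ρ₂ Set.univ).toReal := by
      rw [← ENNReal.toReal_add (measure_ne_top _ _) (measure_ne_top _ _), hpart ρ₂]
    have hm : (ρ₁ Set.univ).toReal ≤ (ρ₂ Set.univ).toReal :=
      ENNReal.toReal_mono (measure_ne_top ρ₂ _) hmass
    suffices hs : flux ρ₁ ρ₂ a ≤ (ρ₂ (arcOC a b)).toReal - (ρ₁ (arcOC a b)).toReal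
        + flux ρ₁ ρ₂ b by linarith
    apply ciSup_le
    intro u
    apply max_le
    · rcases le_total (theta u a) (theta u b) with h | h
      · have he := excess_split ρ₁ ρ₂ h
        have hf := excess_le_flux ρ₁ ρ₂ u b
        linarith
      · have he := excess_split ρ₁ ρ₂ (a := b) (b := a) h
        have hf := excess_le_flux ρ₁ ρ₂ u b
        linarith
    · linarith

end
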